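/- arXiv:2510.18286 — 3 statements merged into one kernel-verified Lean document; each statement's English description precedes it below -/
import Mathlib

section
/- For t > 1, the limit of f_α^sw(t) = (1-α)(1 - t^{1/α})/(1 - t^{(1-α)/α}) as α → 0 from above equals t; and for 0 < t < 1, this limit equals 1. -/
open Filter Topology

/-
With `s = 1/α → ∞` the exponent `(1 - α)/α` is `s - 1`, so the function is
`(1 - α) · (1 - t^s)/(1 - t^s/t)`. For `t < 1` the power `t^s` tends to `0` and the ratio to `1`;
for `t > 1` it tends to `∞`, and dividing numerator and denominator by `t^s` shows that the
ratio tends to `1/(1/t) = t`.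
-/

namespace Real

lemma tendsto_one_sub_rpow_div_one_sub_rpow_sub_one_of_lt_one {t : ℝ} (ht0 : 0 < t)
    (ht1 : t < 1) :
    Tendsto (fun s : ℝ => (1 - t ^ s) / (1 - t ^ (s - 1))) atTop (𝓝 1) := by
  have hpow := tendsto_rpow_atTop_of_base_lt_one t (by linarith) ht1
  have hlim : Tendsto (fun s : ℝ => (1 - t ^ s) / (1 - t ^ s / t)) atTop
      (𝓝 ((1 - 0) / (1 - 0 / t))) :=
    (hpow.const_sub 1).div ((hpow.div_const t).const_sub 1) (by simp)
  simpa [rpow_sub_one ht0.ne'] using hlim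

lemma tendsto_one_sub_rpow_div_one_sub_rpow_sub_one_of_one_lt {t : ℝ} (ht1 : 1 < t) :
    Tendsto (fun s : ℝ => (1 - t ^ s) / (1 - t ^ (s - 1))) atTop (𝓝 t) := by
  have ht0 : 0 < t := by linarith
  have hinv : Tendsto (fun s : ℝ => (t ^ s)⁻¹) atTop (𝓝 0) :=
    (tendsto_rpow_atTop_of_base_gt_one t ht1).inv_tendsto_atTop
  have hlim : Tendsto (fun s : ℝ => ((t ^ s)⁻¹ - 1) / ((t ^ s)⁻¹ - t⁻¹)) atTop
      (𝓝 ((0 - 1) / (0 - t⁻¹))) :=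
    (hinv.sub_const 1).div (hinv.sub_const t⁻¹) (by simp [ht0.ne'])
  rw [zero_sub, zero_sub, neg_div_neg_eq, one_div, inv_inv] at hlim
  refine hlim.congr fun s => ?_
  have hs : t ^ s ≠ 0 := (rpow_pos_of_pos ht0 s).ne'
  rw [rpow_sub_one ht0.ne']
  field_simp

end Real

lemma tendsto_one_sub_mul_one_sub_rpow_div_nhdsGT_zero {t L : ℝ}
    (h : Tendsto (fun s : ℝ => (1 - t ^ s) / (1 - t ^ (s - 1))) atTop (𝓝 L)) :
    Tendsto (fun α : ℝ => (1 - α) * (1 - t ^ (1 / α)) / (1 - t ^ ((1 - α) / α)))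
      (𝓝[>] 0) (𝓝 L) := by
  have hone : Tendsto (fun α : ℝ => 1 - α) (𝓝[>] 0) (𝓝 (1 - 0)) :=
    (tendsto_nhdsWithin_of_tendsto_nhds tendsto_id).const_sub 1
  have hinv : Tendsto (fun α : ℝ => 1 / α) (𝓝[>] 0) atTop := by
    simpa only [one_div] using tendsto_inv_nhdsGT_zero
  have hlim := hone.mul (h.comp hinv)
  rw [sub_zero, one_mul] at hlim
  refine hlim.congr' ?_
  filter_upwards [self_mem_nhdsWithin] with α (hα : 0 < α)
  have hexp : (1 - α) / α = 1 / α - 1 := by field_simp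
  simp only [Function.comp_apply, hexp, mul_div_assoc]

theorem fSW_tendsto_zero_right_general (t : ℝ) (ht : 0 < t) :
    (1 < t → Tendsto (fun α : ℝ => (1 - α) * (1 - t ^ (1 / α)) / (1 - t ^ ((1 - α) / α)))
      (nhdsWithin 0 (Set.Ioi 0)) (nhds t)) ∧
    (t < 1 → Tendsto (fun α : ℝ => (1 - α) * (1 - t ^ (1 / α)) / (1 - t ^ ((1 - α) / α)))
      (nhdsWithin 0 (Set.Ioi 0)) (nhds 1)) :=
  ⟨fun h => tendsto_one_sub_mul_one_sub_rpow_div_nhdsGT_zero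
      (Real.tendsto_one_sub_rpow_div_one_sub_rpow_sub_one_of_one_lt h),
    fun h => tendsto_one_sub_mul_one_sub_rpow_div_nhdsGT_zero
      (Real.tendsto_one_sub_rpow_div_one_sub_rpow_sub_one_of_lt_one ht h)⟩

theorem fSW_tendsto_zero_right (t : ℝ) (ht : 0 < t) (ht1 : t ≠ 1) :
    (1 < t → Tendsto (fun α : ℝ => (1 - α) * (1 - t ^ (1 / α)) / (1 - t ^ ((1 - α) / α)))
      (nhdsWithin 0 (Set.Ioi 0)) (nhds t)) ∧
    (t < 1 → Tendsto (fun α : ℝ => (1 - α) * (1 - t ^ (1 / α)) / (1 - t ^ ((1 - α) / α)))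
      (nhdsWithin 0 (Set.Ioi 0)) (nhds 1)) :=
  fSW_tendsto_zero_right_general t ht
end

section
/- For fixed t > 0 with t ≠ 1, the function β ↦ f_{1/β}^sw(t) = (1 - 1/β)(1 - t^β)/(1 - t^{β-1}) is monotonically increasing in β, for β ranging over values where the expression is defined (β ∉ {0, 1}). -/
/-!
With `L = log t`, the expression equals `M β / M (β - 1)`, where `M β = ∫₀¹ exp (β L s) ds`
is the moment generating function of the uniform law on `[0, L]`. Its logarithm is a cumulant
generating function, hence convex (its second derivative is a variance), and a convex function
has increasing unit increments `log M β - log M (β - 1)`.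
-/

open Real Set MeasureTheory ProbabilityTheory

theorem ConvexOn.monotone_sub_comp_sub {𝕜 : Type*}
    [Field 𝕜] [LinearOrder 𝕜] [IsStrictOrderedRing 𝕜] {f : 𝕜 → 𝕜}
    (hf : ConvexOn 𝕜 univ f) {c : 𝕜} (hc : 0 < c) :
    Monotone fun x ↦ f x - f (x - c) := by
  intro a b hab
  have h₁ := hf.secant_mono (mem_univ (a - c)) (mem_univ a) (mem_univ b)
    (by linarith) (by linarith) hab
  have h₂ := hf.secant_mono (mem_univ b) (mem_univ (a - c)) (mem_univ (b - c))
    (by linarith) (by linarith) (by linarith)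
  have : (f a - f (a - c)) / c ≤ (f b - f (b - c)) / c := calc
    _ = (f a - f (a - c)) / (a - (a - c)) := by ring_nf
    _ ≤ (f b - f (a - c)) / (b - (a - c)) := h₁
    _ = (f (a - c) - f b) / (a - c - b) := by rw [← neg_div_neg_eq]; ring_nf
    _ ≤ (f (b - c) - f b) / (b - c - b) := h₂
    _ = (f b - f (b - c)) / c := by rw [← neg_div_neg_eq]; ring_nf
  exact (div_le_div_iff_of_pos_right hc).1 this

namespace ProbabilityTheory

variable {Ω : Type*} {m : MeasurableSpace Ω} {X : Ω → ℝ} {μ : Measure Ω}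

theorem convexOn_cgf (hX : ∀ t, Integrable (fun ω ↦ exp (t * X ω)) μ) :
    ConvexOn ℝ univ (cgf X μ) := by
  have hint : interior (integrableExpSet X μ) = univ := by
    rw [show integrableExpSet X μ = univ from eq_univ_of_forall hX, interior_univ]
  have hcgf : AnalyticOnNhd ℝ (cgf X μ) univ := hint ▸ analyticOnNhd_cgf
  refine convexOn_univ_of_deriv2_nonneg (fun v ↦ (hcgf v trivial).differentiableAt)
    (fun v ↦ (hcgf.deriv v trivial).differentiableAt) fun v ↦ ?_
  rw [← iteratedDeriv_eq_iterate, iteratedDeriv_two_cgf_eq_integral (hint ▸ mem_univ v)]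
  exact div_nonneg (integral_nonneg fun ω ↦ by positivity) mgf_nonneg

theorem monotone_mgf_div_mgf_sub (hX : ∀ t, Integrable (fun ω ↦ exp (t * X ω)) μ) (hμ : μ ≠ 0)
    {c : ℝ} (hc : 0 < c) : Monotone fun t ↦ mgf X μ t / mgf X μ (t - c) := by
  have hexp : (fun t ↦ mgf X μ t / mgf X μ (t - c)) =
      fun t ↦ exp (cgf X μ t - cgf X μ (t - c)) := by
    ext t
    rw [exp_sub, cgf, cgf, exp_log (mgf_pos' hμ (hX t)), exp_log (mgf_pos' hμ (hX (t - c)))]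
  rw [hexp]
  exact exp_monotone.comp ((convexOn_cgf hX).monotone_sub_comp_sub hc)

end ProbabilityTheory

theorem mgf_const_mul_restrict_Ioc_zero_one {L t : ℝ} (h : t * L ≠ 0) :
    mgf (fun s ↦ L * s) (volume.restrict (Ioc 0 1)) t = (exp (t * L) - 1) / (t * L) := by
  rw [mgf, ← intervalIntegral.integral_of_le zero_le_one]
  simp_rw [← mul_assoc]
  rw [intervalIntegral.integral_comp_mul_left (fun x ↦ exp x) h, integral_exp]
  simp [div_eq_inv_mul]

theorem fSW_inv_beta_monotone (t : ℝ) (ht : 0 < t) (ht1 : t ≠ 1) :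
    MonotoneOn (fun β : ℝ => (1 - 1 / β) * (1 - t ^ β) / (1 - t ^ (β - 1)))
      {β : ℝ | β ≠ 0 ∧ β ≠ 1} := by
  set L := log t
  have hL : L ≠ 0 := log_ne_zero_of_pos_of_ne_one ht ht1
  let M := mgf (fun s ↦ L * s) (volume.restrict (Ioc 0 1))
  have hM : ∀ β ≠ 0, β ≠ 1 →
      (1 - 1 / β) * (1 - t ^ β) / (1 - t ^ (β - 1)) = M β / M (β - 1) := by
    intro β hβ₀ hβ₁
    have hβL : β * L ≠ 0 := mul_ne_zero hβ₀ hL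
    have hβL' : (β - 1) * L ≠ 0 := mul_ne_zero (sub_ne_zero.2 hβ₁) hL
    have hv : exp ((β - 1) * L) - 1 ≠ 0 := sub_ne_zero.2 ((exp_eq_one_iff _).not.2 hβL')
    simp only [M]
    rw [mgf_const_mul_restrict_Ioc_zero_one hβL, mgf_const_mul_restrict_Ioc_zero_one hβL',
      rpow_def_of_pos ht, rpow_def_of_pos ht, mul_comm L, mul_comm L,
      ← neg_sub (exp ((β - 1) * L))]
    field_simp
    ring
  have hmono : Monotone fun β ↦ M β / M (β - 1) := monotone_mgf_div_mgf_sub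
    (fun β ↦ (by fun_prop : Continuous fun s : ℝ ↦ exp (β * (L * s))).integrableOn_Ioc)
    (by simp) zero_lt_one
  intro a ⟨ha₀, ha₁⟩ b ⟨hb₀, hb₁⟩ hab
  simpa only [hM a ha₀ ha₁, hM b hb₀ hb₁] using hmono hab
end

section
/- Let f be a real-valued function on ℝ_{>0} that is concave, differentiable at 1, and satisfies f(1) = 1 and f(t) = t f(1/t) for all t > 0. Then f'(1) = 1/2, and f(t) ≤ (1+t)/2 for all t > 0. -/
theorem petz_concave_le_SLD (f : ℝ → ℝ)
    (hconc : ConcaveOn ℝ (Set.Ioi 0) f)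
    (hdiff : DifferentiableAt ℝ f 1)
    (hf1 : f 1 = 1)
    (hsymm : ∀ t : ℝ, 0 < t → f t = t * f (1 / t)) :
    deriv f 1 = 1 / 2 ∧ ∀ t : ℝ, 0 < t → f t ≤ (1 + t) / 2 := by
  set d := deriv f 1 with hd
  have hfd : HasDerivAt f d 1 := hdiff.hasDerivAt
  -- derivative of t ↦ t * f (1/t) at 1
  have hinv : HasDerivAt (fun t : ℝ => 1 / t) (-1) 1 := by
    simpa using (hasDerivAt_inv (one_ne_zero)).congr_deriv (by norm_num)
  have hcomp : HasDerivAt (fun t : ℝ => f (1 / t)) (-d) 1 := by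
    have : HasDerivAt f d (1 / 1) := by simpa using hfd
    have h := this.comp 1 hinv
    simp only [Function.comp_def] at h
    exact h.congr_deriv (by ring)
  have hg : HasDerivAt (fun t : ℝ => t * f (1 / t)) (1 * f (1 / 1) + (-d) * 1) 1 := by
    have h := (hasDerivAt_id 1).mul hcomp
    simp only [id] at h
    exact h.congr_deriv (by ring)
  have hg' : HasDerivAt f (1 - d) 1 := by
    have heq : f =ᶠ[nhds 1] fun t : ℝ => t * f (1 / t) := by
      filter_upwards [eventually_gt_nhds (show (0:ℝ) < 1 by norm_num)] with t ht
      exact hsymm t ht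
    have h2 := hg.congr_of_eventuallyEq heq
    exact h2.congr_deriv (by simp [hf1]; ring)
  have hdval : d = 1 / 2 := by
    have := hg'.deriv
    rw [← hd] at this
    linarith
  refine ⟨hdval, ?_⟩
  intro t ht
  have hconv : ConvexOn ℝ (Set.Ioi 0) (-f) := hconc.neg
  have hdnf : deriv (-f : ℝ → ℝ) 1 = -(1/2) := by
    have : deriv (-f : ℝ → ℝ) 1 = -deriv f 1 := deriv.neg
    rw [this, ← hd, hdval]
  have h1 : (1 : ℝ) ∈ Set.Ioi (0:ℝ) := by norm_num
  have hdf : DifferentiableAt ℝ (-f : ℝ → ℝ) 1 := hdiff.neg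
  rcases lt_trichotomy t 1 with hlt | heq | hgt
  · have := hconv.slope_le_deriv (Set.mem_Ioi.mpr ht) h1 hlt hdf
    rw [hdnf, slope_def_field] at this
    simp only [Pi.neg_apply, hf1] at this
    have hne : (1:ℝ) - t > 0 := by linarith
    rw [div_le_iff₀ hne] at this
    linarith
  · rw [heq, hf1]; norm_num
  · have := hconv.deriv_le_slope h1 (Set.mem_Ioi.mpr ht) hgt hdf
    rw [hdnf, slope_def_field] at this
    simp only [Pi.neg_apply, hf1] at this
    have hne : t - (1:ℝ) > 0 := by linarith
    rw [le_div_iff₀ hne] at this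
    linarith
end
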